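/- The first-column transfer-matrix identity: for the matrices D₁, E₁ of the Matrix Ansatz solution, the entry (⟨W₁| M₁ M₂ ⋯ M_n |V₁⟩) with each Mᵢ ∈ {D₁, E₁} is a polynomial in α, β, q with nonnegative integer coefficients, for every n ≥ 1 and every choice of the Mᵢ. -/

import Mathlib

open MvPolynomial

/-- Truncation to indices `0, …, n` of the matrix `D₁` of the Matrix Ansatz
solution, with entries in `ℤ[α, β, q]` (variables `X 0 = α`, `X 1 = β`,
`X 2 = q`): `d_{i,i+1} = α` and `0` elsewhere.  (Since `D₁` raises the index by
one and `E₁` is lower triangular, only indices `≤ n` contribute to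
`⟨W₁|M₁⋯Mₙ|V₁⟩`, so this truncation computes the same quantity.) -/
noncomputable def D1trunc (n : ℕ) :
    Matrix (Fin (n + 1)) (Fin (n + 1)) (MvPolynomial (Fin 3) ℤ) :=
  fun i j => if (j : ℕ) = (i : ℕ) + 1 then X 0 else 0

/-- Truncation to indices `0, …, n` of the matrix `E₁` (0-based indexing):
`e_{ij} = β^{i−j+1}(q^j C(i,j) + α ∑_{r<j} C(i−j+r,r) q^r)` for `j ≤ i`,
and `0` above the diagonal. -/
noncomputable def E1trunc (n : ℕ) :
    Matrix (Fin (n + 1)) (Fin (n + 1)) (MvPolynomial (Fin 3) ℤ) :=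
  fun i j => if (j : ℕ) ≤ (i : ℕ) then
    (X 1) ^ ((i : ℕ) - (j : ℕ) + 1) *
      ((X 2) ^ (j : ℕ) * (Nat.choose i j : MvPolynomial (Fin 3) ℤ) +
       X 0 * ∑ r ∈ Finset.range j,
         (Nat.choose ((i : ℕ) - (j : ℕ) + r) r : MvPolynomial (Fin 3) ℤ) * (X 2) ^ r)
  else 0

/-- The row vector `⟨W₁| = (1, 0, …, 0)`. -/
noncomputable def W1trunc (n : ℕ) : Fin (n + 1) → MvPolynomial (Fin 3) ℤ :=
  fun i => if i = 0 then 1 else 0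

/-- The column vector `|V₁⟩ = (1, …, 1)ᵗ`. -/
noncomputable def V1trunc (n : ℕ) : Fin (n + 1) → MvPolynomial (Fin 3) ℤ :=
  fun _ => 1

/-! Polynomials with nonnegative coefficients form a subsemiring, so matrices with entries in it
form a subsemiring of the matrix ring. Every entry of `D₁` and `E₁` is built from `α, β, q` and
natural numbers by sums and products, hence so is every entry of a word in `D₁, E₁`, and pairing
with the nonnegative vectors `⟨W₁|` and `|V₁⟩` stays in the subsemiring. -/

namespace MvPolynomial

variable (σ R : Type*) [CommSemiring R] [PartialOrder R] [IsOrderedRing R]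

def nonnegCoeffs : Subsemiring (MvPolynomial σ R) where
  carrier := {p | ∀ m, 0 ≤ p.coeff m}
  zero_mem' m := by simp
  one_mem' m := by classical rw [coeff_one]; split_ifs <;> simp
  add_mem' hp hq m := by rw [coeff_add]; exact add_nonneg (hp m) (hq m)
  mul_mem' hp hq m := by
    classical rw [coeff_mul]; exact Finset.sum_nonneg fun x _ => mul_nonneg (hp _) (hq _)

variable {σ R}

theorem mem_nonnegCoeffs {p : MvPolynomial σ R} : p ∈ nonnegCoeffs σ R ↔ ∀ m, 0 ≤ p.coeff m :=
  Iff.rfl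

theorem X_mem_nonnegCoeffs (i : σ) : X i ∈ nonnegCoeffs σ R := by
  classical intro m; rw [coeff_X]; split_ifs <;> simp

end MvPolynomial

namespace Subsemiring

variable {n R : Type*} [Fintype n] [NonAssocSemiring R] (S : Subsemiring R)

theorem dotProduct_mem {v w : n → R} (hv : ∀ i, v i ∈ S) (hw : ∀ i, w i ∈ S) : v ⬝ᵥ w ∈ S :=
  sum_mem fun i _ => mul_mem (hv i) (hw i)

theorem vecMul_mem [DecidableEq n] {v : n → R} {A : Matrix n n R} (hv : ∀ i, v i ∈ S)
    (hA : A ∈ S.matrix) (j : n) : Matrix.vecMul v A j ∈ S :=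
  S.dotProduct_mem hv fun i => hA i j

end Subsemiring

theorem D1trunc_mem_nonnegCoeffs (n : ℕ) (i j : Fin (n + 1)) :
    D1trunc n i j ∈ nonnegCoeffs (Fin 3) ℤ := by
  unfold D1trunc
  split_ifs
  exacts [X_mem_nonnegCoeffs 0, zero_mem _]

theorem E1trunc_mem_nonnegCoeffs (n : ℕ) (i j : Fin (n + 1)) :
    E1trunc n i j ∈ nonnegCoeffs (Fin 3) ℤ := by
  have hX := X_mem_nonnegCoeffs (σ := Fin 3) (R := ℤ)
  unfold E1trunc
  split_ifs
  · exact mul_mem (pow_mem (hX 1) _) <|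
      add_mem (mul_mem (pow_mem (hX 2) _) (natCast_mem _ _)) <|
        mul_mem (hX 0) <| sum_mem fun r _ => mul_mem (natCast_mem _ _) (pow_mem (hX 2) _)
  · exact zero_mem _

theorem W1trunc_mem_nonnegCoeffs (n : ℕ) (i : Fin (n + 1)) :
    W1trunc n i ∈ nonnegCoeffs (Fin 3) ℤ := by
  unfold W1trunc
  split_ifs <;> simp

theorem transfer_matrix_positive_general (n : ℕ) (M : Fin n → Bool) :
    ∀ m : Fin 3 →₀ ℕ,
      0 ≤ MvPolynomial.coeff m
        (dotProduct
          (Matrix.vecMul (W1trunc n)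
            ((List.ofFn (fun k : Fin n =>
              if M k then D1trunc n else E1trunc n)).prod))
          (V1trunc n)) := by
  have hword : (List.ofFn fun k : Fin n => if M k then D1trunc n else E1trunc n).prod ∈
      (nonnegCoeffs (Fin 3) ℤ).matrix := by
    refine list_prod_mem fun A hA => ?_
    obtain ⟨k, rfl⟩ := List.mem_ofFn.mp hA
    split_ifs
    exacts [D1trunc_mem_nonnegCoeffs n, E1trunc_mem_nonnegCoeffs n]
  exact mem_nonnegCoeffs.mp <| Subsemiring.dotProduct_mem _
    (Subsemiring.vecMul_mem _ (W1trunc_mem_nonnegCoeffs n) hword) fun _ => one_mem _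

/-- For every `n ≥ 1` and every word `M₁⋯Mₙ` in the matrices `D₁, E₁` of the
Matrix Ansatz solution, the quantity `⟨W₁|M₁⋯Mₙ|V₁⟩` is a polynomial in
`ℤ[α, β, q]` all of whose coefficients are nonnegative. -/
theorem transfer_matrix_positive (n : ℕ) (hn : 1 ≤ n) (M : Fin n → Bool) :
    ∀ m : Fin 3 →₀ ℕ,
      0 ≤ MvPolynomial.coeff m
        (dotProduct
          (Matrix.vecMul (W1trunc n)
            ((List.ofFn (fun k : Fin n =>
              if M k then D1trunc n else E1trunc n)).prod))
          (V1trunc n)) :=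
  transfer_matrix_positive_general n M
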